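/- Let C be a monoidal category with unit object 𝟙, let M be an object equipped with morphisms ε : M ⊗ M → 𝟙 and η : 𝟙 → M ⊗ M satisfying both triangle (zig-zag) identities (i.e. (M, M) is an exact pairing exhibiting M as self-dual), and let M′ be an object equipped with a morphism ε′ : M′ ⊗ M′ → 𝟙. Let f : M → M′ be a morphism for which there exists an isomorphism u : 𝟙 → 𝟙 with ε′ ∘ (f ⊗ f) = u ∘ ε. Define the transpose f^∨ : M′ → M as the composite M′ ≅ 𝟙 ⊗ M′ → (M ⊗ M) ⊗ M′ ≅ M ⊗ (M ⊗ M′) → M ⊗ (M′ ⊗ M′) → M ⊗ 𝟙 ≅ M built from η ⊗ id_{M′}, id_M ⊗ (f ⊗ id_{M′}) and id_M ⊗ ε′. Then f^∨ ∘ f equals ρ_M ∘ (id_M ⊗ u) ∘ ρ_M^{-1}; in particular f^∨ ∘ f is an isomorphism and M is a retract of M′. -/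

import Mathlib

open CategoryTheory MonoidalCategory

/-!
Composing the transpose `f^∨` with `f` and moving `f` across the coevaluation by naturality
produces `(f ⊗ f) ≫ ε'` inside the zig-zag composite; the compatibility `(f ⊗ f) ≫ ε' = ε ≫ u`
turns it into the first triangle identity followed by `M ◁ u`, which is invertible.
-/

namespace CategoryTheory.MonoidalCategory

variable {C : Type*} [Category C] [MonoidalCategory C] {M M' : C}

/-- The transpose `f^∨ : M' ⟶ M` of `f : M ⟶ M'` with respect to the coevaluation `η` on `M`
and the pairing `ε'` on `M'`. -/
def pairingTranspose (η : 𝟙_ C ⟶ M ⊗ M) (ε' : M' ⊗ M' ⟶ 𝟙_ C) (f : M ⟶ M') : M' ⟶ M :=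
  (λ_ M').inv ≫ (η ▷ M') ≫ (α_ M M M').hom ≫ (M ◁ (f ▷ M')) ≫ (M ◁ ε') ≫ (ρ_ M).hom

lemma comp_pairingTranspose (η : 𝟙_ C ⟶ M ⊗ M) (ε' : M' ⊗ M' ⟶ 𝟙_ C) (f : M ⟶ M') :
    f ≫ pairingTranspose η ε' f =
      (λ_ M).inv ≫ (η ▷ M) ≫ (α_ M M M).hom ≫ (M ◁ ((f ⊗ₘ f) ≫ ε')) ≫ (ρ_ M).hom := by
  rw [pairingTranspose, leftUnitor_inv_naturality_assoc, whisker_exchange_assoc,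
    associator_naturality_right_assoc, ← whiskerLeft_comp_assoc, ← whiskerLeft_comp_assoc,
    ← tensorHom_def']

lemma comp_pairingTranspose_of_tensorHom_comp_eq {ε : M ⊗ M ⟶ 𝟙_ C} {η : 𝟙_ C ⟶ M ⊗ M}
    (triangle : (λ_ M).inv ≫ (η ▷ M) ≫ (α_ M M M).hom ≫ (M ◁ ε) ≫ (ρ_ M).hom = 𝟙 M)
    {ε' : M' ⊗ M' ⟶ 𝟙_ C} {f : M ⟶ M'} {u : 𝟙_ C ⟶ 𝟙_ C} (hf : (f ⊗ₘ f) ≫ ε' = ε ≫ u) :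
    f ≫ pairingTranspose η ε' f = (ρ_ M).inv ≫ (M ◁ u) ≫ (ρ_ M).hom := by
  have zigzag : (λ_ M).inv ≫ (η ▷ M) ≫ (α_ M M M).hom ≫ (M ◁ ε) = (ρ_ M).inv := by
    rw [← cancel_mono (ρ_ M).hom]
    simpa using triangle
  rw [comp_pairingTranspose, hf, whiskerLeft_comp, Category.assoc, reassoc_of% zigzag]

end CategoryTheory.MonoidalCategory

theorem transpose_comp_self_eq_unit_iso_general
    {C : Type*} [Category C] [MonoidalCategory C] (M M' : C)
    (ε : M ⊗ M ⟶ 𝟙_ C) (η : 𝟙_ C ⟶ M ⊗ M)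
    (triangle₁ : (λ_ M).inv ≫ (η ▷ M) ≫ (α_ M M M).hom ≫ (M ◁ ε) ≫ (ρ_ M).hom = 𝟙 M)
    (ε' : M' ⊗ M' ⟶ 𝟙_ C) (f : M ⟶ M') (u : 𝟙_ C ≅ 𝟙_ C)
    (hf : (f ⊗ₘ f) ≫ ε' = ε ≫ u.hom) :
    f ≫ ((λ_ M').inv ≫ (η ▷ M') ≫ (α_ M M M').hom ≫ (M ◁ (f ▷ M')) ≫ (M ◁ ε') ≫ (ρ_ M).hom)
        = (ρ_ M).inv ≫ (M ◁ u.hom) ≫ (ρ_ M).hom ∧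
    IsIso (f ≫ ((λ_ M').inv ≫ (η ▷ M') ≫ (α_ M M M').hom ≫ (M ◁ (f ▷ M')) ≫ (M ◁ ε') ≫
        (ρ_ M).hom)) ∧
    ∃ r : M' ⟶ M, f ≫ r = 𝟙 M := by
  have key : f ≫ pairingTranspose η ε' f = ((ρ_ M).symm ≪≫ whiskerLeftIso M u ≪≫ ρ_ M).hom :=
    comp_pairingTranspose_of_tensorHom_comp_eq triangle₁ hf
  refine ⟨key, ?_, ?_⟩
  · rw [← pairingTranspose, key]
    infer_instance
  · exact ⟨pairingTranspose η ε' f ≫ ((ρ_ M).symm ≪≫ whiskerLeftIso M u ≪≫ ρ_ M).inv,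
      by rw [reassoc_of% key, Iso.hom_inv_id]⟩

/-- If `(ε, η)` is an exact self-pairing on `M` (both triangle identities hold),
`ε'` is a pairing on `M'`, and `f : M ⟶ M'` satisfies `ε' ∘ (f ⊗ f) = u ∘ ε` for some
isomorphism `u : 𝟙 ≅ 𝟙`, then the transpose `f^∨ : M' ⟶ M` satisfies
`f^∨ ∘ f = ρ_M ∘ (id_M ⊗ u) ∘ ρ_M⁻¹`; in particular `f^∨ ∘ f` is an isomorphism and
`M` is a retract of `M'`. -/
theorem transpose_comp_self_eq_unit_iso
    {C : Type*} [Category C] [MonoidalCategory C] (M M' : C)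
    (ε : M ⊗ M ⟶ 𝟙_ C) (η : 𝟙_ C ⟶ M ⊗ M)
    (triangle₁ : (λ_ M).inv ≫ (η ▷ M) ≫ (α_ M M M).hom ≫ (M ◁ ε) ≫ (ρ_ M).hom = 𝟙 M)
    (triangle₂ : (ρ_ M).inv ≫ (M ◁ η) ≫ (α_ M M M).inv ≫ (ε ▷ M) ≫ (λ_ M).hom = 𝟙 M)
    (ε' : M' ⊗ M' ⟶ 𝟙_ C) (f : M ⟶ M') (u : 𝟙_ C ≅ 𝟙_ C)
    (hf : (f ⊗ₘ f) ≫ ε' = ε ≫ u.hom) :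
    f ≫ ((λ_ M').inv ≫ (η ▷ M') ≫ (α_ M M M').hom ≫ (M ◁ (f ▷ M')) ≫ (M ◁ ε') ≫ (ρ_ M).hom)
        = (ρ_ M).inv ≫ (M ◁ u.hom) ≫ (ρ_ M).hom ∧
    IsIso (f ≫ ((λ_ M').inv ≫ (η ▷ M') ≫ (α_ M M M').hom ≫ (M ◁ (f ▷ M')) ≫ (M ◁ ε') ≫
        (ρ_ M).hom)) ∧
    ∃ r : M' ⟶ M, f ≫ r = 𝟙 M :=
  transpose_comp_self_eq_unit_iso_general M M' ε η triangle₁ ε' f u hf
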